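/- arXiv:1511.02334 — 5 statements merged into one kernel-verified Lean document; each statement's English description precedes it below -/
import Mathlib

section
/- For every div point set X of 4 points in the class DPS⁺, X is isomorphic to Conv₄ if and only if X is not isomorphic to Conc₄¹ (Theorem 1). -/
open Finset

/-- A (unit) dividon: an ordered pair of a divider and a set of divs. -/
abbrev Dividon : Type := Finset ℕ × Finset (Finset ℕ)

/-- A candidate (unit) div point set: a pair of a point set and a set of dividons. -/
abbrev PreDPS : Type := Finset ℕ × Finset Dividon

/-- The union `⋃δ` of a set of divs. -/
def unionOf (δ : Finset (Finset ℕ)) : Finset ℕ := δ.sup id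

/-- `ξ(D) = π₁(D) ∪ ⋃π₂(D)`. -/
def xi (D : Dividon) : Finset ℕ := D.1 ∪ unionOf D.2

/-- `D = (d, δ)` is a dividon over the point set `P`. -/
def IsDividon (P : Finset ℕ) (D : Dividon) : Prop :=
  D.1.card = 2 ∧ D.1 ⊆ P ∧
    ∃ A B : Finset ℕ, A ≠ B ∧ D.2 = {A, B} ∧ A ∪ B = P \ D.1 ∧ A ∩ B = ∅

/-- `X` is a div point set. -/
def IsDPS (X : PreDPS) : Prop :=
  X.1.Nonempty ∧ X.2.card = Nat.choose X.1.card 2 ∧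
    (∀ D ∈ X.2, IsDividon X.1 D) ∧
    ∀ D₁ ∈ X.2, ∀ D₂ ∈ X.2, D₁.1 = D₂.1 → D₁ = D₂

/-- `φ(δ,T) = 1` if the two TBD points of `T` lie in the same div of `δ`,
`φ(δ,T) = 0` otherwise. -/
def phi (δ : Finset (Finset ℕ)) (T : Finset ℕ) : ℕ :=
  if ∃ dv ∈ δ, (T ∩ dv).card = 2 then 1 else 0

/-- `ψ(δ) = 1` if some div of `δ` has two elements, `ψ(δ) = 0` otherwise. -/
def psi (δ : Finset (Finset ℕ)) : ℕ :=
  if ∃ dv ∈ δ, dv.card = 2 then 1 else 0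

/-- Laws (L1), (L2), (L3) for div point sets. -/
def LawsDPS (X : PreDPS) : Prop :=
  (∀ R ⊆ X.1, R.card = 4 →
    ∀ D₁ ∈ X.2, ∀ D₂ ∈ X.2, ∀ D₃ ∈ X.2,
      D₁.1 ∪ D₂.1 ∪ D₃.1 = R → (D₁.1 ∩ D₂.1 ∩ D₃.1).card = 1 →
      (phi D₁.2 (R \ D₁.1) = 0 ↔ phi D₂.2 (R \ D₂.1) = phi D₃.2 (R \ D₃.1))) ∧
  (∀ R ⊆ X.1, R.card = 4 →
    ∀ D₁ ∈ X.2, ∀ D₂ ∈ X.2, ∀ D₃ ∈ X.2,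
      D₁.1 ∪ D₂.1 ∪ D₃.1 = R → (D₁.1 ∩ D₂.1 ∩ D₃.1).card = 1 →
      (phi D₁.2 (R \ D₁.1) = 1 ↔ phi D₂.2 (R \ D₂.1) ≠ phi D₃.2 (R \ D₃.1))) ∧
  (∀ R ⊆ X.1, R.card = 4 →
    ∀ D₁ ∈ X.2, ∀ D₂ ∈ X.2, ∀ D₃ ∈ X.2,
      D₁ ≠ D₂ → D₁ ≠ D₃ → D₂ ≠ D₃ →
      D₁.1 ∪ D₂.1 ∪ D₃.1 ⊆ R → (D₁.1 ∪ D₂.1 ∪ D₃.1).card = 3 →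
      phi D₁.2 (R \ D₁.1) = 0 → phi D₂.2 (R \ D₂.1) = 0 →
      phi D₃.2 (R \ D₃.1) = 1)

/-- The class DPS⁺: div point sets satisfying (L1), (L2), (L3). -/
def DPSplus (X : PreDPS) : Prop := IsDPS X ∧ LawsDPS X

/-- `D = (d, δ)` is a unit dividon over the point set `P`. -/
def IsUnitDividon (P : Finset ℕ) (D : Dividon) : Prop :=
  D.1.card = 2 ∧ D.1 ⊆ P ∧
    ∃ A B : Finset ℕ, A ≠ B ∧ D.2 = {A, B} ∧ (A ∪ B).card = 2 ∧
      A ∪ B ⊆ P \ D.1 ∧ A ∩ B = ∅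

/-- `U` is a unit div point set. -/
def IsUDPS (U : PreDPS) : Prop :=
  U.1.Nonempty ∧
    U.2.card = Nat.choose U.1.card 2 * Nat.choose (U.1.card - 2) 2 ∧
    (∀ D ∈ U.2, IsUnitDividon U.1 D) ∧
    ∀ D₁ ∈ U.2, ∀ D₂ ∈ U.2,
      D₁.1 = D₂.1 → unionOf D₁.2 = unionOf D₂.2 → D₁ = D₂

/-- Laws (U1), (U2), (U3) for unit div point sets. -/
def LawsUDPS (U : PreDPS) : Prop :=
  (∀ R ⊆ U.1, R.card = 4 →
    ∀ D₁ ∈ U.2, ∀ D₂ ∈ U.2, ∀ D₃ ∈ U.2,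
      D₁ ≠ D₂ → D₁ ≠ D₃ → D₂ ≠ D₃ →
      xi D₁ = R → xi D₂ = R → xi D₃ = R →
      (D₁.1 ∩ D₂.1 ∩ D₃.1).card = 1 →
      (psi D₁.2 = 0 ↔ psi D₂.2 = psi D₃.2)) ∧
  (∀ R ⊆ U.1, R.card = 4 →
    ∀ D₁ ∈ U.2, ∀ D₂ ∈ U.2, ∀ D₃ ∈ U.2,
      D₁ ≠ D₂ → D₁ ≠ D₃ → D₂ ≠ D₃ →
      xi D₁ = R → xi D₂ = R → xi D₃ = R →
      (D₁.1 ∩ D₂.1 ∩ D₃.1).card = 1 →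
      (psi D₁.2 = 1 ↔ psi D₂.2 ≠ psi D₃.2)) ∧
  (∀ R ⊆ U.1, R.card = 4 →
    ∀ D₁ ∈ U.2, ∀ D₂ ∈ U.2, ∀ D₃ ∈ U.2,
      D₁ ≠ D₂ → D₁ ≠ D₃ → D₂ ≠ D₃ →
      xi D₁ = R → xi D₂ = R → xi D₃ = R →
      (D₁.1 ∪ D₂.1 ∪ D₃.1).card = 3 →
      psi D₁.2 = 0 → psi D₂.2 = 0 → psi D₃.2 = 1)

/-- The class UDPS⁺: unit div point sets satisfying (U1), (U2), (U3). -/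
def UDPSplus (U : PreDPS) : Prop := IsUDPS U ∧ LawsUDPS U

/-- `F_udps`: breaks every dividon of a div point set into unit dividons,
one for each 2-element subset `T = {a,b}` of the TBD points: the unit dividon is
`(d, {{a,b},∅})` if `a` and `b` lie in the same div, and `(d, {{a},{b}})` otherwise. -/
def Fudps (X : PreDPS) : PreDPS :=
  (X.1, X.2.biUnion fun D =>
    ((X.1 \ D.1).powersetCard 2).image fun T =>
      (D.1, if ∃ dv ∈ D.2, T ⊆ dv then ({T, ∅} : Finset (Finset ℕ))
            else T.image fun a => ({a} : Finset ℕ)))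

/-- `Y` is the sub div point set of `X` on the point set `Ps` (where `4 ≤ |Ps|`):
the unique div point set with point set `Ps` whose image under `F_udps` has exactly
the unit dividons `D` of `F_udps X` with `ξ(D) ⊆ Ps`. -/
def IsSdps (X : PreDPS) (Ps : Finset ℕ) (Y : PreDPS) : Prop :=
  Ps ⊆ X.1 ∧ 4 ≤ Ps.card ∧ IsDPS Y ∧ Y.1 = Ps ∧
    (Fudps Y).2 = (Fudps X).2.filter fun D => xi D ⊆ Ps

/-- Isomorphism of (candidate) div point sets. -/
def Isom (X Y : PreDPS) : Prop :=
  ∃ f : ℕ → ℕ, Set.BijOn f ↑X.1 ↑Y.1 ∧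
    ∀ D ∈ X.2, (D.1.image f, D.2.image (Finset.image f)) ∈ Y.2

/-- Isomorphism of sets of (unit) dividons. -/
def OmegaIsom (Ω₁ Ω₂ : Finset Dividon) : Prop :=
  Ω₁.card = Ω₂.card ∧
    ∃ f : ℕ → ℕ, Set.BijOn f ↑(Ω₁.sup xi) ↑(Ω₂.sup xi) ∧
      ∀ D ∈ Ω₁, (D.1.image f, D.2.image (Finset.image f)) ∈ Ω₂

/-- The div point set Conc₄¹. -/
def Conc41 : PreDPS :=
  ({1, 2, 3, 4},
   {({1, 2}, {{3}, {4}}), ({1, 3}, {{2}, {4}}), ({1, 4}, {{2}, {3}}),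
    ({2, 3}, {{1, 4}, ∅}), ({2, 4}, {{1, 3}, ∅}), ({3, 4}, {{1, 2}, ∅})})

/-- The div point set Conv₄. -/
def Conv4 : PreDPS :=
  ({1, 2, 3, 4},
   {({1, 2}, {{3, 4}, ∅}), ({1, 3}, {{2}, {4}}), ({1, 4}, {{2, 3}, ∅}),
    ({2, 3}, {{1, 4}, ∅}), ({2, 4}, {{1}, {3}}), ({3, 4}, {{1, 2}, ∅})})

/-- The div point set Conv_n on `{1, …, n}`: the dividon with divider `d = {i,j}`,
`i < j`, has divs `{p : i < p < j}` and `{p : p < i or p > j}`. -/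
def ConvN (n : ℕ) : PreDPS :=
  (Finset.Icc 1 n,
   ((Finset.Icc 1 n).powersetCard 2).image fun d =>
     (d, ({(Finset.Icc 1 n).filter fun p => (∃ i ∈ d, i < p) ∧ ∃ j ∈ d, p < j,
           (Finset.Icc 1 n).filter fun p =>
             (∀ i ∈ d, p < i) ∨ ∀ i ∈ d, i < p} : Finset (Finset ℕ))))

/-! On four points a dividon is determined by a single bit: whether the two points off its
divider lie in the same div. Law (L1) says that every point lies on an even number of such
"same-div" dividers, and law (L3) that the remaining "split" dividers contain no triangle.
If some point lies on split dividers only, (L3) makes every divider avoiding it same-div: this is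
`Conc₄¹` with that point inside the triangle. Otherwise every point lies on exactly one split
divider, so the split dividers are the two diagonals of a quadrilateral: this is `Conv₄`.
The two configurations are distinguished by the point of `Conc₄¹` lying on no same-div divider
and by the two split dividers of `Conv₄` being disjoint. -/

theorem eq_insert_four_of_card_eq_four {s : Finset ℕ} (h4 : s.card = 4) {a b c d : ℕ}
    (ha : a ∈ s) (hb : b ∈ s) (hc : c ∈ s) (hd : d ∈ s) (hab : a ≠ b) (hac : a ≠ c) (had : a ≠ d)
    (hbc : b ≠ c) (hbd : b ≠ d) (hcd : c ≠ d) : s = {a, b, c, d} := by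
  refine (eq_of_subset_of_card_le ?_ ?_).symm
  · simp [insert_subset_iff, *]
  · rw [h4, card_eq_four.2 ⟨a, b, c, d, hab, hac, had, hbc, hbd, hcd, rfl⟩]

theorem exists_eq_insert_four_of_card_eq_four {s : Finset ℕ} (h4 : s.card = 4) {a b : ℕ}
    (ha : a ∈ s) (hb : b ∈ s) (hab : a ≠ b) :
    ∃ c d, c ∈ s ∧ d ∈ s ∧ a ≠ c ∧ a ≠ d ∧ b ≠ c ∧ b ≠ d ∧ c ≠ d ∧ s = {a, b, c, d} := by
  obtain ⟨c, d, hcd, hs⟩ := card_eq_two.1 (show ((s.erase a).erase b).card = 2 by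
    rw [card_erase_of_mem (mem_erase.2 ⟨hab.symm, hb⟩), card_erase_of_mem ha, h4])
  have hc : c ∈ (s.erase a).erase b := hs ▸ mem_insert_self c {d}
  have hd : d ∈ (s.erase a).erase b := hs ▸ mem_insert_of_mem (mem_singleton_self d)
  simp only [mem_erase] at hc hd
  exact ⟨c, d, hc.2.2, hd.2.2, Ne.symm hc.2.1, Ne.symm hd.2.1, Ne.symm hc.1, Ne.symm hd.1, hcd,
    eq_insert_four_of_card_eq_four h4 ha hb hc.2.2 hd.2.2 hab (Ne.symm hc.2.1) (Ne.symm hd.2.1)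
      (Ne.symm hc.1) (Ne.symm hd.1) hcd⟩

theorem eq_pair_of_subset_insert_four {a b c d : ℕ} {s : Finset ℕ} (hs : s ⊆ {a, b, c, d})
    (h2 : s.card = 2) :
    s = {a, b} ∨ s = {a, c} ∨ s = {a, d} ∨ s = {b, c} ∨ s = {b, d} ∨ s = {c, d} := by
  obtain ⟨x, y, hxy, rfl⟩ := card_eq_two.1 h2
  rw [insert_subset_iff, singleton_subset_iff] at hs
  simp only [mem_insert, mem_singleton] at hs
  rcases hs with ⟨rfl | rfl | rfl | rfl, rfl | rfl | rfl | rfl⟩ <;> simp_all [pair_comm]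

theorem mem_image_iff_of_injOn {f : ℕ → ℕ} {s t : Finset ℕ} (hf : Set.InjOn f s) (ht : t ⊆ s)
    {x : ℕ} (hx : x ∈ s) : f x ∈ t.image f ↔ x ∈ t := by
  rw [← mem_coe, coe_image]
  exact hf.mem_image_iff (coe_subset.2 ht) hx

theorem exists_bijOn_of_eq_insert_four {s : Finset ℕ} {a b c d : ℕ} (hs : s = {a, b, c, d})
    (hab : a ≠ b) (hac : a ≠ c) (had : a ≠ d) (hbc : b ≠ c) (hbd : b ≠ d) (hcd : c ≠ d) :
    ∃ f : ℕ → ℕ, Set.BijOn f s ({1, 2, 3, 4} : Finset ℕ) ∧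
      f a = 1 ∧ f b = 2 ∧ f c = 3 ∧ f d = 4 := by
  set f : ℕ → ℕ := fun t => if t = a then 1 else if t = b then 2 else if t = c then 3 else 4
  have fa : f a = 1 := by simp [f]
  have fb : f b = 2 := by simp [f, hab.symm]
  have fc : f c = 3 := by simp [f, hac.symm, hbc.symm]
  have fd : f d = 4 := by simp [f, had.symm, hbd.symm, hcd.symm]
  have hinj : Set.InjOn f s := by
    subst hs; simp [Set.injOn_insert, fa, fb, fc, fd, hab, hac, had, hbc, hbd, hcd]
  refine ⟨f, ?_, fa, fb, fc, fd⟩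
  convert hinj.bijOn_image
  subst hs; simp [Set.image_insert_eq, fa, fb, fc, fd]

theorem IsDividon.divs_eq {P : Finset ℕ} {D : Dividon} (hD : IsDividon P D)
    (h2 : (P \ D.1).card = 2) : D.2 = {∅, P \ D.1} ∨ D.2 = (P \ D.1).image singleton := by
  obtain ⟨-, -, A, B, -, hδ, hu, hi⟩ := hD
  rw [hδ, ← hu]
  rw [← hu, card_union_of_disjoint (disjoint_iff_inter_eq_empty.2 hi)] at h2
  by_cases hA : A = ∅
  · simp [hA]
  by_cases hB : B = ∅
  · simp [hB, pair_comm]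
  have hA1 := card_pos.2 (nonempty_iff_ne_empty.2 hA)
  have hB1 := card_pos.2 (nonempty_iff_ne_empty.2 hB)
  obtain ⟨u, rfl⟩ := card_eq_one.1 (by omega : A.card = 1)
  obtain ⟨v, rfl⟩ := card_eq_one.1 (by omega : B.card = 1)
  right
  simp [image_insert]

theorem phi_insert_empty_self {T : Finset ℕ} (hT : T.card = 2) : phi {∅, T} T = 1 :=
  if_pos ⟨T, by simp, by rwa [inter_self]⟩

theorem phi_image_singleton (T : Finset ℕ) : phi (T.image singleton) T = 0 := by
  refine if_neg ?_
  rintro ⟨_, hdv, h⟩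
  obtain ⟨u, -, rfl⟩ := mem_image.1 hdv
  have := card_le_card (inter_subset_right (s₁ := T) (s₂ := {u}))
  rw [card_singleton] at this
  omega

theorem IsDPS.image_fst_eq {X : PreDPS} (hX : IsDPS X) :
    X.2.image Prod.fst = X.1.powersetCard 2 := by
  obtain ⟨-, hcard, hdiv, huniq⟩ := hX
  refine eq_of_subset_of_card_le (fun d hd => ?_) ?_
  · obtain ⟨D, hD, rfl⟩ := mem_image.1 hd
    exact mem_powersetCard.2 ⟨(hdiv D hD).2.1, (hdiv D hD).1⟩
  · rw [card_image_of_injOn fun D₁ h₁ D₂ h₂ => huniq D₁ h₁ D₂ h₂, card_powersetCard, hcard]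

theorem IsDPS.isDividon {X : PreDPS} (hX : IsDPS X) {D : Dividon} (hD : D ∈ X.2) :
    IsDividon X.1 D :=
  hX.2.2.1 D hD

theorem IsDPS.fst_subset {X : PreDPS} (hX : IsDPS X) {D : Dividon} (hD : D ∈ X.2) : D.1 ⊆ X.1 :=
  (hX.isDividon hD).2.1

theorem IsDPS.card_fst {X : PreDPS} (hX : IsDPS X) {D : Dividon} (hD : D ∈ X.2) : D.1.card = 2 :=
  (hX.isDividon hD).1

theorem IsDPS.card_sdiff_fst {X : PreDPS} (hX : IsDPS X) (h4 : X.1.card = 4) {D : Dividon}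
    (hD : D ∈ X.2) : (X.1 \ D.1).card = 2 := by
  rw [card_sdiff_of_subset (hX.fst_subset hD), h4, hX.card_fst hD]

theorem IsDPS.exists_mem_fst_eq {X : PreDPS} (hX : IsDPS X) {d : Finset ℕ} (hd : d ⊆ X.1)
    (hd2 : d.card = 2) : ∃ D ∈ X.2, D.1 = d := by
  have : d ∈ X.2.image Prod.fst := hX.image_fst_eq ▸ mem_powersetCard.2 ⟨hd, hd2⟩
  simpa using this

/-- For four points, the two points off the divider `d` lie in the same div exactly when the
other div is empty. -/
def SameDiv (X : PreDPS) (d : Finset ℕ) : Prop := ∃ D ∈ X.2, D.1 = d ∧ ∅ ∈ D.2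

theorem IsDPS.sameDiv_iff {X : PreDPS} (hX : IsDPS X) {D : Dividon} (hD : D ∈ X.2) :
    SameDiv X D.1 ↔ ∅ ∈ D.2 :=
  ⟨fun ⟨D', hD', h1, h2⟩ => hX.2.2.2 D' hD' D hD h1 ▸ h2, fun h => ⟨D, hD, rfl, h⟩⟩

theorem IsDPS.phi_eq_ite {X : PreDPS} (hX : IsDPS X) (h4 : X.1.card = 4) {D : Dividon}
    (hD : D ∈ X.2) : phi D.2 (X.1 \ D.1) = if ∅ ∈ D.2 then 1 else 0 := by
  have h2 := hX.card_sdiff_fst h4 hD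
  rcases (hX.isDividon hD).divs_eq h2 with h | h <;> rw [h]
  · simp [phi_insert_empty_self h2]
  · simp [phi_image_singleton]

theorem not_sameDiv_iff_sameDiv_iff {X : PreDPS} (hX : DPSplus X) (h4 : X.1.card = 4)
    {a b c d : ℕ} (ha : a ∈ X.1) (hb : b ∈ X.1) (hc : c ∈ X.1) (hd : d ∈ X.1)
    (hab : a ≠ b) (hac : a ≠ c) (had : a ≠ d) (hbc : b ≠ c) (hbd : b ≠ d) (hcd : c ≠ d) :
    ¬SameDiv X {a, b} ↔ (SameDiv X {a, c} ↔ SameDiv X {a, d}) := by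
  obtain ⟨D₁, hD₁, h₁⟩ := hX.1.exists_mem_fst_eq (by simp [insert_subset_iff, *]) (card_pair hab)
  obtain ⟨D₂, hD₂, h₂⟩ := hX.1.exists_mem_fst_eq (by simp [insert_subset_iff, *]) (card_pair hac)
  obtain ⟨D₃, hD₃, h₃⟩ := hX.1.exists_mem_fst_eq (by simp [insert_subset_iff, *]) (card_pair had)
  have hunion : D₁.1 ∪ D₂.1 ∪ D₃.1 = X.1 := by
    rw [h₁, h₂, h₃, eq_insert_four_of_card_eq_four h4 ha hb hc hd hab hac had hbc hbd hcd]
    ext; simp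
  have hinter : (D₁.1 ∩ D₂.1 ∩ D₃.1).card = 1 := by
    rw [h₁, h₂, h₃, card_eq_one]; exact ⟨a, by ext; grind⟩
  have := hX.2.1 X.1 subset_rfl h4 D₁ hD₁ D₂ hD₂ D₃ hD₃ hunion hinter
  rw [hX.1.phi_eq_ite h4 hD₁, hX.1.phi_eq_ite h4 hD₂, hX.1.phi_eq_ite h4 hD₃] at this
  rw [← h₁, ← h₂, ← h₃, hX.1.sameDiv_iff hD₁, hX.1.sameDiv_iff hD₂, hX.1.sameDiv_iff hD₃]
  split_ifs at this <;> simp_all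

theorem sameDiv_of_not_sameDiv_of_not_sameDiv {X : PreDPS} (hX : DPSplus X)
    (h4 : X.1.card = 4) {a b c : ℕ} (ha : a ∈ X.1) (hb : b ∈ X.1) (hc : c ∈ X.1)
    (hab : a ≠ b) (hac : a ≠ c) (hbc : b ≠ c)
    (h₁ : ¬SameDiv X {a, b}) (h₂ : ¬SameDiv X {a, c}) : SameDiv X {b, c} := by
  obtain ⟨D₁, hD₁, e₁⟩ := hX.1.exists_mem_fst_eq (by simp [insert_subset_iff, *]) (card_pair hab)
  obtain ⟨D₂, hD₂, e₂⟩ := hX.1.exists_mem_fst_eq (by simp [insert_subset_iff, *]) (card_pair hac)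
  obtain ⟨D₃, hD₃, e₃⟩ := hX.1.exists_mem_fst_eq (by simp [insert_subset_iff, *]) (card_pair hbc)
  have hne : ∀ {D D' : Dividon} (x : ℕ), x ∈ D.1 → x ∉ D'.1 → D ≠ D' := by
    rintro D D' x hx hx' rfl; exact hx' hx
  have hsub : D₁.1 ∪ D₂.1 ∪ D₃.1 = {a, b, c} := by rw [e₁, e₂, e₃]; ext; simp
  rw [← e₁, hX.1.sameDiv_iff hD₁] at h₁
  rw [← e₂, hX.1.sameDiv_iff hD₂] at h₂
  rw [← e₃, hX.1.sameDiv_iff hD₃]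
  have := hX.2.2.2 X.1 subset_rfl h4 D₁ hD₁ D₂ hD₂ D₃ hD₃
    (hne b (by simp [e₁]) (by simp [e₂, hab.symm, hbc]))
    (hne a (by simp [e₁]) (by simp [e₃, hab, hac]))
    (hne a (by simp [e₂]) (by simp [e₃, hab, hac]))
    (hsub ▸ by simp [insert_subset_iff, *])
    (by rw [hsub, card_eq_three.2 ⟨a, b, c, hab, hac, hbc, rfl⟩])
  rw [hX.1.phi_eq_ite h4 hD₁, hX.1.phi_eq_ite h4 hD₂, hX.1.phi_eq_ite h4 hD₃] at this
  simpa [h₁, h₂] using this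

/-- `w` plays the role of the point `1` of `Conc₄¹`, inside the triangle of the other three. -/
def IsConcaveAt (X : PreDPS) (w : ℕ) : Prop := ∀ D ∈ X.2, ∅ ∈ D.2 ↔ w ∉ D.1

/-- `w` and `y` play the roles of the opposite vertices `1` and `3` of the quadrilateral `Conv₄`:
the dividers with both other points in one div are the four sides. -/
def IsConvexWithDiagonal (X : PreDPS) (w y : ℕ) : Prop :=
  ∀ D ∈ X.2, ∅ ∈ D.2 ↔ (w ∈ D.1 ↔ y ∉ D.1)

theorem isConcaveAt_of_forall_not_sameDiv {X : PreDPS} (hX : DPSplus X) (h4 : X.1.card = 4)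
    {w : ℕ} (hw : w ∈ X.1)
    (h : ∀ v ∈ X.1, v ≠ w → ¬SameDiv X {w, v}) : IsConcaveAt X w := by
  intro D hD
  obtain ⟨x, y, hxy, hd⟩ := card_eq_two.1 (hX.1.card_fst hD)
  have hxyX := hX.1.fst_subset hD
  rw [hd, insert_subset_iff, singleton_subset_iff] at hxyX
  rw [← hX.1.sameDiv_iff hD, hd]
  by_cases hwx : w = x
  · subst hwx; simp [h y hxyX.2 hxy.symm]
  by_cases hwy : w = y
  · subst hwy; rw [pair_comm]; simp [h x hxyX.1 hxy]
  simpa [hwx, hwy] using sameDiv_of_not_sameDiv_of_not_sameDiv hX h4 hw hxyX.1 hxyX.2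
    hwx hwy hxy (h x hxyX.1 (Ne.symm hwx)) (h y hxyX.2 (Ne.symm hwy))

theorem isConvexWithDiagonal_of_sameDiv {X : PreDPS} (hX : DPSplus X) (h4 : X.1.card = 4)
    {a b c d : ℕ} (ha : a ∈ X.1) (hb : b ∈ X.1) (hc : c ∈ X.1) (hd : d ∈ X.1)
    (hab : a ≠ b) (hac : a ≠ c) (had : a ≠ d) (hbc : b ≠ c) (hbd : b ≠ d) (hcd : c ≠ d)
    (jab : SameDiv X {a, b}) (jac : ¬SameDiv X {a, c})
    (hcov : ∀ w ∈ X.1, ∃ v ∈ X.1, v ≠ w ∧ SameDiv X {w, v}) :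
    IsConvexWithDiagonal X a c := by
  have hP := eq_insert_four_of_card_eq_four h4 ha hb hc hd hab hac had hbc hbd hcd
  have va := not_sameDiv_iff_sameDiv_iff hX h4 ha hb hc hd hab hac had hbc hbd hcd
  have vb := not_sameDiv_iff_sameDiv_iff hX h4 hb ha hc hd hab.symm hbc hbd hac had hcd
  have vc := not_sameDiv_iff_sameDiv_iff hX h4 hc ha hb hd hac.symm hbc.symm hcd hab had hbd
  rw [pair_comm b a] at vb
  rw [pair_comm c a, pair_comm c b] at vc
  -- `c` lies on some same-div divider, hence by (L1) on two of them
  obtain ⟨v, hv, hvc, jcv⟩ := hcov c hc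
  have jad : SameDiv X {a, d} := by tauto
  obtain ⟨jbc, jcd⟩ : SameDiv X {b, c} ∧ SameDiv X {c, d} := by
    rw [hP] at hv
    simp only [mem_insert, mem_singleton] at hv
    rcases hv with rfl | rfl | rfl | rfl
    · rw [pair_comm] at jcv; exact absurd jcv jac
    · rw [pair_comm] at jcv; tauto
    · exact absurd rfl hvc
    · tauto
  have jbd : ¬SameDiv X {b, d} := by tauto
  intro D hD
  rw [← hX.1.sameDiv_iff hD]
  rcases eq_pair_of_subset_insert_four (hP ▸ hX.1.fst_subset hD) (hX.1.card_fst hD)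
    with h | h | h | h | h | h <;> rw [h] <;>
    simp [jab, jac, jad, jbc, jbd, jcd, hab, hac, had, hcd, hac.symm, hbc.symm]

theorem exists_isConcaveAt_or_isConvexWithDiagonal {X : PreDPS} (hX : DPSplus X)
    (h4 : X.1.card = 4) :
    (∃ w ∈ X.1, IsConcaveAt X w) ∨ ∃ w ∈ X.1, ∃ y ∈ X.1, w ≠ y ∧ IsConvexWithDiagonal X w y := by
  by_cases h : ∃ w ∈ X.1, ∀ v ∈ X.1, v ≠ w → ¬SameDiv X {w, v}
  · obtain ⟨w, hw, hsplit⟩ := h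
    exact .inl ⟨w, hw, isConcaveAt_of_forall_not_sameDiv hX h4 hw hsplit⟩
  push Not at h
  obtain ⟨a, ha⟩ := card_pos.1 (by omega : 0 < X.1.card)
  obtain ⟨b, hb, hba, jab⟩ := h a ha
  obtain ⟨c, d, hc, hd, hac, had, hbc, hbd, hcd, -⟩ :=
    exists_eq_insert_four_of_card_eq_four h4 ha hb hba.symm
  by_cases jac : SameDiv X {a, c}
  · have jad : ¬SameDiv X {a, d} :=
      by have := not_sameDiv_iff_sameDiv_iff hX h4 ha hb hc hd hba.symm hac had hbc hbd hcd; tauto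
    exact .inr ⟨a, ha, d, hd, had, isConvexWithDiagonal_of_sameDiv hX h4 ha hb hd hc hba.symm
      had hac hbd hbc hcd.symm jab jad h⟩
  · exact .inr ⟨a, ha, c, hc, hac, isConvexWithDiagonal_of_sameDiv hX h4 ha hb hc hd hba.symm
      hac had hbc hbd hcd jab jac h⟩

theorem isom_of_bijOn {X Y : PreDPS} (hX : IsDPS X) (hY : IsDPS Y) (h4 : X.1.card = 4)
    {f : ℕ → ℕ} (hf : Set.BijOn f X.1 Y.1)
    (h : ∀ D ∈ X.2, ∀ E ∈ Y.2, E.1 = D.1.image f → (∅ ∈ D.2 ↔ ∅ ∈ E.2)) : Isom X Y := by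
  refine ⟨f, hf, fun D hD => ?_⟩
  have hd2 := hX.card_fst hD
  have hdX := hX.fst_subset hD
  have hYf : Y.1 = X.1.image f := by rw [← coe_inj, coe_image, hf.image_eq]
  obtain ⟨E, hE, hED⟩ := hY.exists_mem_fst_eq (hYf ▸ image_subset_image hdX)
    (by rw [card_image_of_injOn (hf.injOn.mono hdX), hd2])
  have hsd : Y.1 \ E.1 = (X.1 \ D.1).image f := by
    rw [hED, hYf, image_sdiff_of_injOn hf.injOn hdX]
  have h2 := hX.card_sdiff_fst h4 hD
  have h2' : (Y.1 \ E.1).card = 2 := by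
    rw [hsd, card_image_of_injOn (hf.injOn.mono sdiff_subset), h2]
  have hiff := h D hD E hE hED
  suffices D.2.image (image f) = E.2 by rwa [← hED, this]
  rcases (hX.isDividon hD).divs_eq h2 with hδ | hδ <;>
    rcases (hY.isDividon hE).divs_eq h2' with hε | hε <;>
    rw [hδ, hε] at hiff <;> rw [hδ, hε, hsd] <;> simp [image_image, Function.comp_def] at hiff ⊢

theorem isDPS_conc41 : IsDPS Conc41 := by
  refine ⟨by decide, by decide, ?_, by decide⟩
  simp only [Conc41, mem_insert, mem_singleton]
  rintro D (rfl | rfl | rfl | rfl | rfl | rfl) <;>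
    exact ⟨by decide, by decide, _, _, by decide, rfl, by decide, by decide⟩

theorem isDPS_conv4 : IsDPS Conv4 := by
  refine ⟨by decide, by decide, ?_, by decide⟩
  simp only [Conv4, mem_insert, mem_singleton]
  rintro D (rfl | rfl | rfl | rfl | rfl | rfl) <;>
    exact ⟨by decide, by decide, _, _, by decide, rfl, by decide, by decide⟩

theorem conc41_empty_mem_iff : ∀ E ∈ Conc41.2, ∅ ∈ E.2 ↔ 1 ∉ E.1 := by decide

theorem conv4_empty_mem_iff : ∀ E ∈ Conv4.2, ∅ ∈ E.2 ↔ (1 ∈ E.1 ↔ 3 ∉ E.1) := by decide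

theorem conv4_fst_eq_of_not_disjoint : ∀ E₁ ∈ Conv4.2, ∀ E₂ ∈ Conv4.2,
    ∅ ∉ E₁.2 → ∅ ∉ E₂.2 → ¬Disjoint E₁.1 E₂.1 → E₁.1 = E₂.1 := by decide

theorem isom_conc41_of_isConcaveAt {X : PreDPS} (hX : IsDPS X) (h4 : X.1.card = 4) {w : ℕ}
    (hw : w ∈ X.1) (hc : IsConcaveAt X w) : Isom X Conc41 := by
  obtain ⟨x, hx, hxw⟩ := exists_mem_ne (by omega : 1 < X.1.card) w
  obtain ⟨y, z, -, -, hwy, hwz, hxy, hxz, hyz, hP⟩ :=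
    exists_eq_insert_four_of_card_eq_four h4 hw hx hxw.symm
  obtain ⟨f, hf, hfw, -⟩ := exists_bijOn_of_eq_insert_four hP hxw.symm hwy hwz hxy hxz hyz
  refine isom_of_bijOn hX isDPS_conc41 h4 hf fun D hD E hE hED => ?_
  rw [hc D hD, conc41_empty_mem_iff E hE, hED, ← hfw,
    mem_image_iff_of_injOn hf.injOn (hX.fst_subset hD) hw]

theorem isom_conv4_of_isConvexWithDiagonal {X : PreDPS} (hX : IsDPS X) (h4 : X.1.card = 4)
    {w y : ℕ} (hw : w ∈ X.1) (hy : y ∈ X.1) (hwy : w ≠ y) (hc : IsConvexWithDiagonal X w y) :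
    Isom X Conv4 := by
  obtain ⟨x, z, -, -, hwx, hwz, hyx, hyz, hxz, hP⟩ :=
    exists_eq_insert_four_of_card_eq_four h4 hw hy hwy
  obtain ⟨f, hf, hfw, -, hfy, -⟩ := exists_bijOn_of_eq_insert_four
    (show X.1 = {w, x, y, z} by rw [hP, insert_comm y x])
    hwx hwy hwz hyx.symm hxz hyz
  refine isom_of_bijOn hX isDPS_conv4 h4 hf fun D hD E hE hED => ?_
  rw [hc D hD, conv4_empty_mem_iff E hE, hED, ← hfw, ← hfy,
    mem_image_iff_of_injOn hf.injOn (hX.fst_subset hD) hw,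
    mem_image_iff_of_injOn hf.injOn (hX.fst_subset hD) hy]

theorem not_isom_conv4_of_isConcaveAt {X : PreDPS} (hX : IsDPS X) (h4 : X.1.card = 4) {w : ℕ}
    (hw : w ∈ X.1) (hc : IsConcaveAt X w) : ¬Isom X Conv4 := by
  rintro ⟨f, hf, hmap⟩
  obtain ⟨x, hx, hxw⟩ := exists_mem_ne (by omega : 1 < X.1.card) w
  obtain ⟨y, -, hy, -, hwy, -, hxy, -⟩ := exists_eq_insert_four_of_card_eq_four h4 hw hx hxw.symm
  obtain ⟨D₁, hD₁, e₁⟩ :=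
    hX.exists_mem_fst_eq (by simp [insert_subset_iff, *]) (card_pair hxw.symm)
  obtain ⟨D₂, hD₂, e₂⟩ := hX.exists_mem_fst_eq (by simp [insert_subset_iff, *]) (card_pair hwy)
  have : D₁.1.image f = D₂.1.image f :=
    conv4_fst_eq_of_not_disjoint _ (hmap D₁ hD₁) _ (hmap D₂ hD₂)
    (by simp [hc D₁ hD₁, e₁]) (by simp [hc D₂ hD₂, e₂])
    (not_disjoint_iff.2 ⟨f w, by simp [e₁], by simp [e₂]⟩)
  have hx' : f x ∈ D₂.1.image f := this ▸ mem_image_of_mem f (by simp [e₁])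
  rw [mem_image_iff_of_injOn hf.injOn (hX.fst_subset hD₂) hx, e₂] at hx'
  simp [hxw, hxy] at hx'

theorem not_isom_conc41_of_isConvexWithDiagonal {X : PreDPS} (hX : IsDPS X) (h4 : X.1.card = 4)
    {w y : ℕ} (hw : w ∈ X.1) (hy : y ∈ X.1) (hwy : w ≠ y) (hc : IsConvexWithDiagonal X w y) :
    ¬Isom X Conc41 := by
  rintro ⟨f, hf, hmap⟩
  obtain ⟨t, ht, hft⟩ := hf.surjOn (show (1 : ℕ) ∈ (Conc41.1 : Set ℕ) by simp [Conc41])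
  obtain ⟨x, -, hx, -, hwx, -, hyx, -⟩ := exists_eq_insert_four_of_card_eq_four h4 hw hy hwy
  obtain ⟨u, hu, hut, hsep⟩ :
      ∃ u ∈ X.1, t ≠ u ∧ (w ∈ ({t, u} : Finset ℕ) ↔ y ∉ ({t, u} : Finset ℕ)) := by
    by_cases htwy : t = w ∨ t = y
    · refine ⟨x, hx, by rintro rfl; tauto, ?_⟩
      rcases htwy with rfl | rfl <;> simp [hwy, hwx, hyx, hwy.symm]
    · push Not at htwy
      exact ⟨w, hw, htwy.1, by simp [htwy.2.symm, hwy.symm]⟩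
  obtain ⟨D, hD, e⟩ :=
    hX.exists_mem_fst_eq (by simp [insert_subset_iff, mem_coe.1 ht, hu]) (card_pair hut)
  have := (conc41_empty_mem_iff _ (hmap D hD)).1 (by simpa [hc D hD, e] using hsep)
  exact this (by simp [e, hft])

/-- Theorem 1: every div point set of 4 points in DPS⁺ is isomorphic to Conv₄
iff it is not isomorphic to Conc₄¹. -/
theorem stmt_0 (X : PreDPS) (hX : DPSplus X) (h4 : X.1.card = 4) :
    Isom X Conv4 ↔ ¬ Isom X Conc41 := by
  rcases exists_isConcaveAt_or_isConvexWithDiagonal hX h4 with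
    ⟨w, hw, hc⟩ | ⟨w, hw, y, hy, hwy, hc⟩
  · exact iff_of_false (not_isom_conv4_of_isConcaveAt hX.1 h4 hw hc)
      (not_not.2 (isom_conc41_of_isConcaveAt hX.1 h4 hw hc))
  · exact iff_of_true (isom_conv4_of_isConvexWithDiagonal hX.1 h4 hw hy hwy hc)
      (not_isom_conc41_of_isConvexWithDiagonal hX.1 h4 hw hy hwy hc)
end

section
/- The map F_udps, regarded as a map from the class of div point sets with at least 4 points to the class of unit div point sets, is not surjective: there exists a unit div point set that is not equal to F_udps(X) for any div point set X with at least 4 points (Lemma 1, non-surjectivity). -/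
open Finset

/-!
A dividon of a div point set with at least five points splits at least three points into two
divs, so by pigeonhole one div contains two of them and `F_udps` produces a unit dividon of the
form `(d, {{a,b}, ∅})`. Hence the unit div point set on five points all of whose unit dividons
have the form `(d, {{a},{b}})` is not in the image.
-/

def separatedUnitDividons (P : Finset ℕ) : Finset Dividon :=
  (P.powersetCard 2).biUnion fun d =>
    ((P \ d).powersetCard 2).image fun T => (d, T.image fun a => ({a} : Finset ℕ))

lemma unionOf_image_singleton (T : Finset ℕ) :
    unionOf (T.image fun a => ({a} : Finset ℕ)) = T := by
  rw [unionOf, Finset.sup_image]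
  exact Finset.sup_singleton_eq_self T

lemma mem_separatedUnitDividons {P : Finset ℕ} {D : Dividon} :
    D ∈ separatedUnitDividons P ↔ ∃ d, d ⊆ P ∧ d.card = 2 ∧
      ∃ T, T ⊆ P \ d ∧ T.card = 2 ∧ D = (d, T.image fun a => ({a} : Finset ℕ)) := by
  simp only [separatedUnitDividons, mem_biUnion, mem_image, mem_powersetCard, and_assoc,
    eq_comm (a := D)]

lemma card_separatedUnitDividons (P : Finset ℕ) :
    (separatedUnitDividons P).card = P.card.choose 2 * (P.card - 2).choose 2 := by
  have hdisj : (P.powersetCard 2 : Set (Finset ℕ)).PairwiseDisjoint fun d =>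
      ((P \ d).powersetCard 2).image fun T => (d, T.image fun a => ({a} : Finset ℕ)) := by
    intro d₁ _ d₂ _ hne
    simp only [Function.onFun, disjoint_left, mem_image]
    rintro _ ⟨T₁, _, rfl⟩ ⟨T₂, _, h⟩
    exact hne (congrArg Prod.fst h).symm
  have hfiber : ∀ d ∈ P.powersetCard 2, (((P \ d).powersetCard 2).image fun T =>
      (d, T.image fun a => ({a} : Finset ℕ))).card = (P.card - 2).choose 2 := by
    intro d hd
    obtain ⟨hdP, hd⟩ := mem_powersetCard.mp hd
    rw [card_image_of_injective _ fun T₁ T₂ h => by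
      simpa [unionOf_image_singleton] using congrArg (unionOf ∘ Prod.snd) h,
      card_powersetCard, card_sdiff_of_subset hdP, hd]
  rw [separatedUnitDividons, card_biUnion hdisj, sum_congr rfl hfiber, sum_const,
    card_powersetCard, smul_eq_mul]

lemma isUDPS_separatedUnitDividons {P : Finset ℕ} (hP : P.Nonempty) :
    IsUDPS (P, separatedUnitDividons P) := by
  refine ⟨hP, card_separatedUnitDividons P, ?_, ?_⟩
  · intro D hD
    obtain ⟨d, hdP, hd, T, hTP, hT, rfl⟩ := mem_separatedUnitDividons.mp hD
    obtain ⟨a, b, hab, rfl⟩ := card_eq_two.mp hT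
    refine ⟨hd, hdP, {a}, {b}, by simpa using hab, by simp [image_insert], ?_, ?_, ?_⟩
    · rw [← insert_eq, card_pair hab]
    · rwa [← insert_eq]
    · simp [singleton_inter_of_notMem, hab]
  · intro D₁ h₁ D₂ h₂ hd hunion
    obtain ⟨d₁, -, -, T₁, -, -, rfl⟩ := mem_separatedUnitDividons.mp h₁
    obtain ⟨d₂, -, -, T₂, -, -, rfl⟩ := mem_separatedUnitDividons.mp h₂
    rw [unionOf_image_singleton, unionOf_image_singleton] at hunion
    simp_all

lemma empty_notMem_of_mem_separatedUnitDividons {P : Finset ℕ} {D : Dividon}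
    (hD : D ∈ separatedUnitDividons P) : ∅ ∉ D.2 := by
  obtain ⟨d, -, -, T, -, -, rfl⟩ := mem_separatedUnitDividons.mp hD
  simp

lemma IsDividon.exists_pair_subset_div {P : Finset ℕ} {D : Dividon} (hD : IsDividon P D)
    (hP : 5 ≤ P.card) : ∃ T ⊆ P \ D.1, T.card = 2 ∧ ∃ dv ∈ D.2, T ⊆ dv := by
  obtain ⟨hd, hdP, A, B, -, hδ, hAB, hABi⟩ := hD
  rw [hδ]
  have hcard : A.card + B.card = (P \ D.1).card := by
    rw [← hAB, card_union_of_disjoint (disjoint_iff_inter_eq_empty.mpr hABi)]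
  rw [card_sdiff_of_subset hdP, hd] at hcard
  obtain ⟨dv, hdv, hdv2⟩ : ∃ dv ∈ ({A, B} : Finset (Finset ℕ)), 2 ≤ dv.card := by
    rcases le_or_gt 2 A.card with hA | hA
    · exact ⟨A, by simp, hA⟩
    · exact ⟨B, by simp, by omega⟩
  obtain ⟨T, hTdv, hT⟩ := exists_subset_card_eq hdv2
  have hdvP : dv ⊆ P \ D.1 := by
    rw [← hAB]
    rcases mem_insert.mp hdv with rfl | h
    · exact subset_union_left
    · rw [mem_singleton.mp h]; exact subset_union_right
  exact ⟨T, hTdv.trans hdvP, hT, dv, hdv, hTdv⟩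

lemma exists_empty_mem_divs_Fudps {X : PreDPS} (hX : IsDPS X) (hcard : 5 ≤ X.1.card) :
    ∃ D ∈ (Fudps X).2, ∅ ∈ D.2 := by
  obtain ⟨-, hX2, hdiv, -⟩ := hX
  obtain ⟨D, hD⟩ : X.2.Nonempty := by
    rw [← card_pos, hX2]
    exact Nat.choose_pos (by omega)
  obtain ⟨T, hTP, hT, hsame⟩ := (hdiv D hD).exists_pair_subset_div hcard
  refine ⟨(D.1, {T, ∅}), ?_, by simp⟩
  simp only [Fudps, mem_biUnion, mem_image, mem_powersetCard]
  exact ⟨D, hD, T, ⟨hTP, hT⟩, by simp [hsame]⟩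

/-- Lemma 1 (non-surjectivity): some unit div point set is not the image under
`F_udps` of any div point set of at least 4 points. -/
theorem stmt_3 :
    ∃ U : PreDPS, IsUDPS U ∧
      ∀ X : PreDPS, IsDPS X → 4 ≤ X.1.card → Fudps X ≠ U := by
  refine ⟨(Icc 1 5, separatedUnitDividons (Icc 1 5)),
    isUDPS_separatedUnitDividons ⟨1, by decide⟩, fun X hX _ hF => ?_⟩
  have hcard : 5 ≤ X.1.card := by
    rw [show X.1 = Icc 1 5 from congrArg Prod.fst hF]
    decide
  obtain ⟨D, hD, hempty⟩ := exists_empty_mem_divs_Fudps hX hcard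
  rw [hF] at hD
  exact empty_notMem_of_mem_separatedUnitDividons hD hempty
end

section
/- For every div point set X with at least 4 points, the unit div point set F_udps(X) satisfies: for all distinct unit dividons D₁, D₂, D₃ of F_udps(X) with π₁(D₁) = π₁(D₂) = π₁(D₃) and |⋃π₂(D₁) ∪ ⋃π₂(D₂) ∪ ⋃π₂(D₃)| = 3, one has ψ(π₂(D₁)) = 1 iff ψ(π₂(D₂)) = ψ(π₂(D₃)), and ψ(π₂(D₁)) = 0 iff ψ(π₂(D₂)) ≠ ψ(π₂(D₃)). -/
open Finset

/-
Unit dividons of `F_udps X` with a common divider all come from one dividon `(d, {A, B})` of `X`,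
and three distinct ones whose pairs cover only three points `a, b, c` have the pairs
`{a, b}, {a, c}, {b, c}`. The pair `{x, y}` gets `ψ = 1` exactly when `x ∈ A ↔ y ∈ A`, and
`(a ∈ A ↔ b ∈ A) ↔ ((a ∈ A ↔ c ∈ A) ↔ (b ∈ A ↔ c ∈ A))` is a tautology: `ψ₁ + ψ₂ + ψ₃` is odd.
-/

section Pairs

variable {α : Type*} [DecidableEq α]

lemma eq_pair_of_subset_triple {a b c : α} {T : Finset α} (hT : T ⊆ {a, b, c}) (h : #T = 2) :
    T = {a, b} ∨ T = {a, c} ∨ T = {b, c} := by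
  obtain ⟨x, y, -, rfl⟩ := card_eq_two.mp h
  simp only [insert_subset_iff, singleton_subset_iff, mem_insert, mem_singleton] at hT
  obtain ⟨hx | hx | hx, hy | hy | hy⟩ := hT <;> subst hx hy <;> simp_all [pair_comm]

lemma exists_eq_pairs_of_card_union_eq_three {T₁ T₂ T₃ : Finset α}
    (h₁ : #T₁ = 2) (h₂ : #T₂ = 2) (h₃ : #T₃ = 2)
    (h₁₂ : T₁ ≠ T₂) (h₁₃ : T₁ ≠ T₃) (h₂₃ : T₂ ≠ T₃) (h : #(T₁ ∪ T₂ ∪ T₃) = 3) :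
    ∃ a b c, T₁ = {a, b} ∧ T₂ = {a, c} ∧ T₃ = {b, c} := by
  obtain ⟨a, b, c, -, -, -, hS⟩ := card_eq_three.mp h
  have hsub : T₁ ⊆ {a, b, c} ∧ T₂ ⊆ {a, b, c} ∧ T₃ ⊆ {a, b, c} := by
    simp only [← hS, union_assoc, subset_union_left, true_and]
    exact ⟨subset_union_left.trans subset_union_right, subset_union_right.trans subset_union_right⟩
  obtain ⟨s₁, s₂, s₃⟩ := hsub
  rcases eq_pair_of_subset_triple s₁ h₁ with rfl | rfl | rfl <;>
  rcases eq_pair_of_subset_triple s₂ h₂ with rfl | rfl | rfl <;>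
  rcases eq_pair_of_subset_triple s₃ h₃ with rfl | rfl | rfl <;>
  simp only [ne_eq, not_true_eq_false] at h₁₂ h₁₃ h₂₃ <;>
  grind [pair_comm]

lemma exists_mem_pair_subset_iff {A B : Finset α} (hAB : Disjoint A B) {x y : α}
    (hx : x ∈ A ∪ B) (hy : y ∈ A ∪ B) :
    (∃ dv ∈ ({A, B} : Finset (Finset α)), {x, y} ⊆ dv) ↔ (x ∈ A ↔ y ∈ A) := by
  have hB : ∀ {z}, z ∈ A ∪ B → (z ∈ B ↔ z ∉ A) := fun hz =>
    ⟨fun hzB hzA => disjoint_left.mp hAB hzA hzB, fun hzA => (mem_union.mp hz).resolve_left hzA⟩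
  simp only [mem_insert, mem_singleton, exists_eq_or_imp, exists_eq_left, insert_subset_iff,
    singleton_subset_iff, hB hx, hB hy]
  tauto

end Pairs

def unitDivs (δ : Finset (Finset ℕ)) (T : Finset ℕ) : Finset (Finset ℕ) :=
  if ∃ dv ∈ δ, T ⊆ dv then {T, ∅} else T.image fun a => {a}

lemma mem_Fudps_iff {X : PreDPS} {D : Dividon} :
    D ∈ (Fudps X).2 ↔
      ∃ E ∈ X.2, ∃ T ⊆ X.1 \ E.1, #T = 2 ∧ (E.1, unitDivs E.2 T) = D := by
  simp only [Fudps, unitDivs, mem_biUnion, mem_image, mem_powersetCard, and_assoc]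

lemma unionOf_unitDivs (δ : Finset (Finset ℕ)) (T : Finset ℕ) : unionOf (unitDivs δ T) = T := by
  unfold unitDivs unionOf
  split_ifs
  · simp
  · ext; simp

lemma psi_unitDivs (δ : Finset (Finset ℕ)) {T : Finset ℕ} (hT : #T = 2) :
    psi (unitDivs δ T) = if ∃ dv ∈ δ, T ⊆ dv then 1 else 0 := by
  unfold unitDivs psi
  split_ifs with _ h h
  · rfl
  · exact absurd ⟨T, by simp, hT⟩ h
  · obtain ⟨_, hdv, hcard⟩ := h
    obtain ⟨a, -, rfl⟩ := mem_image.mp hdv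
    simp at hcard
  · rfl

lemma exists_psi_unitDivs_pair {P : Finset ℕ} {E : Dividon} (hE : IsDividon P E) :
    ∃ A : Finset ℕ, ∀ x y, {x, y} ⊆ P \ E.1 → #{x, y} = 2 →
      psi (unitDivs E.2 {x, y}) = if (x ∈ A ↔ y ∈ A) then 1 else 0 := by
  obtain ⟨-, -, A, B, -, hδ, hU, hI⟩ := hE
  refine ⟨A, fun x y hxy hc => ?_⟩
  rw [← hU, insert_subset_iff, singleton_subset_iff] at hxy
  simp only [psi_unitDivs _ hc, hδ,
    exists_mem_pair_subset_iff (disjoint_iff_inter_eq_empty.mpr hI) hxy.1 hxy.2]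

theorem stmt_4_general (X : PreDPS) (hX : IsDPS X) :
    ∀ D₁ ∈ (Fudps X).2, ∀ D₂ ∈ (Fudps X).2, ∀ D₃ ∈ (Fudps X).2,
      D₁ ≠ D₂ → D₁ ≠ D₃ → D₂ ≠ D₃ →
      D₁.1 = D₂.1 → D₂.1 = D₃.1 →
      (unionOf D₁.2 ∪ unionOf D₂.2 ∪ unionOf D₃.2).card = 3 →
      (psi D₁.2 = 1 ↔ psi D₂.2 = psi D₃.2) ∧
      (psi D₁.2 = 0 ↔ psi D₂.2 ≠ psi D₃.2) := by
  obtain ⟨-, -, hdiv, huniq⟩ := hX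
  rintro D₁ h₁ D₂ h₂ D₃ h₃ h₁₂ h₁₃ h₂₃ e₁₂ e₂₃ hcard
  obtain ⟨E, hE, T₁, hT₁, hc₁, rfl⟩ := mem_Fudps_iff.mp h₁
  obtain ⟨E₂, hE₂, T₂, hT₂, hc₂, rfl⟩ := mem_Fudps_iff.mp h₂
  obtain ⟨E₃, hE₃, T₃, hT₃, hc₃, rfl⟩ := mem_Fudps_iff.mp h₃
  obtain rfl : E = E₂ := huniq _ hE _ hE₂ e₁₂
  obtain rfl : E = E₃ := huniq _ hE _ hE₃ e₂₃
  simp only [unionOf_unitDivs] at hcard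
  obtain ⟨a, b, c, rfl, rfl, rfl⟩ := exists_eq_pairs_of_card_union_eq_three hc₁ hc₂ hc₃
    (by rintro rfl; exact h₁₂ rfl) (by rintro rfl; exact h₁₃ rfl) (by rintro rfl; exact h₂₃ rfl)
    hcard
  obtain ⟨A, hA⟩ := exists_psi_unitDivs_pair (hdiv E hE)
  simp only [hA a b hT₁ hc₁, hA a c hT₂ hc₂, hA b c hT₃ hc₃]
  by_cases a ∈ A <;> by_cases b ∈ A <;> by_cases c ∈ A <;> simp [*]

/-- For every div point set `X` of at least 4 points, `F_udps X` satisfies: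
for all distinct unit dividons `D₁, D₂, D₃` with the same divider whose TBD points
together form a 3-element set, `ψ(π₂(D₁)) = 1 ↔ ψ(π₂(D₂)) = ψ(π₂(D₃))` and
`ψ(π₂(D₁)) = 0 ↔ ψ(π₂(D₂)) ≠ ψ(π₂(D₃))`. -/
theorem stmt_4 (X : PreDPS) (hX : IsDPS X) (h4 : 4 ≤ X.1.card) :
    ∀ D₁ ∈ (Fudps X).2, ∀ D₂ ∈ (Fudps X).2, ∀ D₃ ∈ (Fudps X).2,
      D₁ ≠ D₂ → D₁ ≠ D₃ → D₂ ≠ D₃ →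
      D₁.1 = D₂.1 → D₂.1 = D₃.1 →
      (unionOf D₁.2 ∪ unionOf D₂.2 ∪ unionOf D₃.2).card = 3 →
      (psi D₁.2 = 1 ↔ psi D₂.2 = psi D₃.2) ∧
      (psi D₁.2 = 0 ↔ psi D₂.2 ≠ psi D₃.2) :=
  stmt_4_general X hX
end

section
/- A div point set X with at least 4 points satisfies laws (L1), (L2), (L3) (i.e., X ∈ DPS⁺) if and only if the unit div point set F_udps(X) satisfies laws (U1), (U2), (U3) (i.e., F_udps(X) ∈ UDPS⁺) (Lemma 2). -/
open Finset

/-! Fix a 4-set `R ⊆ P`. The unit dividons `E` of `F_udps X` with `ξ(E) = R` are exactly the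
`unitDividon D (R ∖ d)` for the dividons `D = (d, δ)` of `X` with `d ⊆ R`; they keep the divider
`d`, and `ψ` of such a unit dividon is `φ(δ, R ∖ d)`. Hence (Uᵢ) is (Lᵢ) read through this
correspondence, once the side conditions are matched: for three 2-subsets of `R` with exactly
one common point, covering `R` is the same as being pairwise distinct. -/

def unitDividon (D : Dividon) (T : Finset ℕ) : Dividon :=
  (D.1, if ∃ dv ∈ D.2, T ⊆ dv then ({T, ∅} : Finset (Finset ℕ))
        else T.image fun a => ({a} : Finset ℕ))

lemma mem_Fudps {X : PreDPS} {E : Dividon} :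
    E ∈ (Fudps X).2 ↔ ∃ D ∈ X.2, ∃ T ∈ (X.1 \ D.1).powersetCard 2, unitDividon D T = E := by
  simp only [Fudps, mem_biUnion, mem_image, unitDividon]

lemma unionOf_unitDividon (D : Dividon) (T : Finset ℕ) : unionOf (unitDividon D T).2 = T := by
  unfold unitDividon unionOf
  split_ifs
  · simp
  · ext a
    simp

lemma xi_unitDividon (D : Dividon) (T : Finset ℕ) : xi (unitDividon D T) = D.1 ∪ T := by
  rw [xi, unionOf_unitDividon]
  rfl

lemma psi_unitDividon (D : Dividon) {T : Finset ℕ} (hT : T.card = 2) :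
    psi (unitDividon D T).2 = phi D.2 T := by
  have hpair : (∃ dv ∈ D.2, T ⊆ dv) ↔ ∃ dv ∈ D.2, (T ∩ dv).card = 2 := by
    refine exists_congr fun dv => and_congr_right fun _ => ⟨fun h => ?_, fun h => ?_⟩
    · rwa [inter_eq_left.2 h]
    · exact inter_eq_left.1 (eq_of_subset_of_card_le inter_subset_left (by omega))
  unfold unitDividon psi phi
  split_ifs <;> simp_all

lemma card_union_le_three_of_card_eq_two {d e : Finset ℕ} (hd : d.card = 2) (he : e.card = 2)
    (hde : (d ∩ e).Nonempty) : (d ∪ e).card ≤ 3 := by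
  have := card_union_add_card_inter d e
  have := hde.card_pos
  omega

lemma pairwise_ne_of_union_eq_of_card_inter_eq_one {R d₁ d₂ d₃ : Finset ℕ} (hR : R.card = 4)
    (h₁ : d₁.card = 2) (h₂ : d₂.card = 2) (h₃ : d₃.card = 2) (hun : d₁ ∪ d₂ ∪ d₃ = R)
    (hint : (d₁ ∩ d₂ ∩ d₃).card = 1) : d₁ ≠ d₂ ∧ d₁ ≠ d₃ ∧ d₂ ≠ d₃ := by
  have hne : (d₁ ∩ d₂ ∩ d₃).Nonempty := card_pos.1 (by omega)
  subst hun
  refine ⟨?_, ?_, ?_⟩ <;> rintro rfl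
  · rw [union_self] at hR
    have := card_union_le_three_of_card_eq_two h₁ h₃ (hne.mono (by grind))
    omega
  · rw [union_right_comm, union_self] at hR
    have := card_union_le_three_of_card_eq_two h₁ h₂ (hne.mono (by grind))
    omega
  · rw [union_assoc, union_self] at hR
    have := card_union_le_three_of_card_eq_two h₁ h₂ (hne.mono (by grind))
    omega

lemma exists_eq_pair_of_mem {d : Finset ℕ} (hd : d.card = 2) {x : ℕ} (hx : x ∈ d) :
    ∃ y, y ≠ x ∧ d = {x, y} := by
  obtain ⟨a, b, hab, rfl⟩ := card_eq_two.1 hd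
  rcases mem_insert.1 hx with rfl | hx
  · exact ⟨b, hab.symm, rfl⟩
  · rw [mem_singleton.1 hx]
    exact ⟨a, hab, pair_comm a b⟩

lemma union_eq_of_card_inter_eq_one {R d₁ d₂ d₃ : Finset ℕ} (hR : R.card = 4)
    (h₁ : d₁ ⊆ R) (h₂ : d₂ ⊆ R) (h₃ : d₃ ⊆ R)
    (c₁ : d₁.card = 2) (c₂ : d₂.card = 2) (c₃ : d₃.card = 2)
    (n₁₂ : d₁ ≠ d₂) (n₁₃ : d₁ ≠ d₃) (n₂₃ : d₂ ≠ d₃)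
    (hint : (d₁ ∩ d₂ ∩ d₃).card = 1) : d₁ ∪ d₂ ∪ d₃ = R := by
  obtain ⟨x, hx⟩ := card_eq_one.1 hint
  have hx' : x ∈ d₁ ∩ d₂ ∩ d₃ := hx ▸ mem_singleton_self x
  simp only [mem_inter] at hx'
  obtain ⟨y₁, hy₁, rfl⟩ := exists_eq_pair_of_mem c₁ hx'.1.1
  obtain ⟨y₂, hy₂, rfl⟩ := exists_eq_pair_of_mem c₂ hx'.1.2
  obtain ⟨y₃, hy₃, rfl⟩ := exists_eq_pair_of_mem c₃ hx'.2
  refine eq_of_subset_of_card_le (union_subset (union_subset h₁ h₂) h₃) ?_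
  have : ({x, y₁} ∪ {x, y₂} ∪ {x, y₃} : Finset ℕ) = {x, y₁, y₂, y₃} := by grind
  rw [hR, this, card_insert_of_notMem, card_insert_of_notMem, card_pair] <;> grind

def TripleLaw (X : PreDPS) (H : Finset ℕ → Finset ℕ → Finset ℕ → Prop)
    (C : ℕ → ℕ → ℕ → Prop) : Prop :=
  ∀ R ⊆ X.1, R.card = 4 → ∀ D₁ ∈ X.2, ∀ D₂ ∈ X.2, ∀ D₃ ∈ X.2,
    D₁.1 ⊆ R → D₂.1 ⊆ R → D₃.1 ⊆ R → D₁.1 ≠ D₂.1 → D₁.1 ≠ D₃.1 → D₂.1 ≠ D₃.1 →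
    H D₁.1 D₂.1 D₃.1 → C (phi D₁.2 (R \ D₁.1)) (phi D₂.2 (R \ D₂.1)) (phi D₃.2 (R \ D₃.1))

lemma exists_of_mem_Fudps_of_xi_eq {X : PreDPS} {E : Dividon} (hE : E ∈ (Fudps X).2)
    {R : Finset ℕ} (hER : xi E = R) : ∃ D ∈ X.2, D.1 ⊆ R ∧ E = unitDividon D (R \ D.1) ∧
      psi E.2 = phi D.2 (R \ D.1) := by
  obtain ⟨D, hD, T, hT, rfl⟩ := mem_Fudps.1 hE
  obtain ⟨hT, hT₂⟩ := mem_powersetCard.1 hT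
  rw [xi_unitDividon] at hER
  have hRT : R \ D.1 = T := by
    rw [← hER, union_sdiff_cancel_left (subset_sdiff.1 hT).2.symm]
  exact ⟨D, hD, hER ▸ subset_union_left, by rw [hRT], by rw [hRT, psi_unitDividon D hT₂]⟩

section IsDPS

variable {X : PreDPS} (hX : IsDPS X)
include hX

lemma IsDPS.card_divider {D : Dividon} (hD : D ∈ X.2) : D.1.card = 2 :=
  (hX.2.2.1 D hD).1

lemma IsDPS.eq_iff_divider_eq {D₁ D₂ : Dividon} (hD₁ : D₁ ∈ X.2) (hD₂ : D₂ ∈ X.2) :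
    D₁ = D₂ ↔ D₁.1 = D₂.1 :=
  ⟨congrArg Prod.fst, hX.2.2.2 D₁ hD₁ D₂ hD₂⟩

lemma IsDPS.card_sdiff_divider {D : Dividon} (hD : D ∈ X.2) {R : Finset ℕ} (hR : R.card = 4)
    (hDR : D.1 ⊆ R) : (R \ D.1).card = 2 := by
  rw [card_sdiff_of_subset hDR, hR, hX.card_divider hD]

lemma IsDPS.unitDividon_mem_Fudps {D : Dividon} (hD : D ∈ X.2) {R : Finset ℕ} (hR : R ⊆ X.1)
    (hR₄ : R.card = 4) (hDR : D.1 ⊆ R) : unitDividon D (R \ D.1) ∈ (Fudps X).2 :=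
  mem_Fudps.2 ⟨D, hD, R \ D.1,
    mem_powersetCard.2 ⟨sdiff_subset_sdiff hR subset_rfl, hX.card_sdiff_divider hD hR₄ hDR⟩, rfl⟩

theorem IsDPS.tripleLaw_iff (H : Finset ℕ → Finset ℕ → Finset ℕ → Prop)
    (C : ℕ → ℕ → ℕ → Prop) :
    TripleLaw X H C ↔
      ∀ R ⊆ (Fudps X).1, R.card = 4 → ∀ E₁ ∈ (Fudps X).2, ∀ E₂ ∈ (Fudps X).2,
        ∀ E₃ ∈ (Fudps X).2, E₁ ≠ E₂ → E₁ ≠ E₃ → E₂ ≠ E₃ →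
        xi E₁ = R → xi E₂ = R → xi E₃ = R →
        H E₁.1 E₂.1 E₃.1 → C (psi E₁.2) (psi E₂.2) (psi E₃.2) := by
  constructor
  · intro hL R hR hR₄ E₁ hE₁ E₂ hE₂ E₃ hE₃ h₁₂ h₁₃ h₂₃ hx₁ hx₂ hx₃ hH
    obtain ⟨D₁, hD₁, hs₁, rfl, hp₁⟩ := exists_of_mem_Fudps_of_xi_eq hE₁ hx₁
    obtain ⟨D₂, hD₂, hs₂, rfl, hp₂⟩ := exists_of_mem_Fudps_of_xi_eq hE₂ hx₂
    obtain ⟨D₃, hD₃, hs₃, rfl, hp₃⟩ := exists_of_mem_Fudps_of_xi_eq hE₃ hx₃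
    rw [hp₁, hp₂, hp₃]
    exact hL R hR hR₄ D₁ hD₁ D₂ hD₂ D₃ hD₃ hs₁ hs₂ hs₃
      (fun h => h₁₂ (by rw [(hX.eq_iff_divider_eq hD₁ hD₂).2 h]))
      (fun h => h₁₃ (by rw [(hX.eq_iff_divider_eq hD₁ hD₃).2 h]))
      (fun h => h₂₃ (by rw [(hX.eq_iff_divider_eq hD₂ hD₃).2 h])) hH
  · intro hU R hR hR₄ D₁ hD₁ D₂ hD₂ D₃ hD₃ hs₁ hs₂ hs₃ h₁₂ h₁₃ h₂₃ hH
    have key := hU R hR hR₄ _ (hX.unitDividon_mem_Fudps hD₁ hR hR₄ hs₁)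
      _ (hX.unitDividon_mem_Fudps hD₂ hR hR₄ hs₂) _ (hX.unitDividon_mem_Fudps hD₃ hR hR₄ hs₃)
      (mt (congrArg Prod.fst) h₁₂) (mt (congrArg Prod.fst) h₁₃) (mt (congrArg Prod.fst) h₂₃)
      (by rw [xi_unitDividon, union_sdiff_of_subset hs₁])
      (by rw [xi_unitDividon, union_sdiff_of_subset hs₂])
      (by rw [xi_unitDividon, union_sdiff_of_subset hs₃]) hH
    rwa [psi_unitDividon D₁ (hX.card_sdiff_divider hD₁ hR₄ hs₁),
      psi_unitDividon D₂ (hX.card_sdiff_divider hD₂ hR₄ hs₂),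
      psi_unitDividon D₃ (hX.card_sdiff_divider hD₃ hR₄ hs₃)] at key

lemma IsDPS.forall_sharing_point_iff_tripleLaw (C : ℕ → ℕ → ℕ → Prop) :
    (∀ R ⊆ X.1, R.card = 4 → ∀ D₁ ∈ X.2, ∀ D₂ ∈ X.2, ∀ D₃ ∈ X.2,
      D₁.1 ∪ D₂.1 ∪ D₃.1 = R → (D₁.1 ∩ D₂.1 ∩ D₃.1).card = 1 →
      C (phi D₁.2 (R \ D₁.1)) (phi D₂.2 (R \ D₂.1)) (phi D₃.2 (R \ D₃.1))) ↔
    TripleLaw X (fun d₁ d₂ d₃ => (d₁ ∩ d₂ ∩ d₃).card = 1) C := by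
  constructor
  · intro hL R hR hR₄ D₁ hD₁ D₂ hD₂ D₃ hD₃ hs₁ hs₂ hs₃ h₁₂ h₁₃ h₂₃ hint
    exact hL R hR hR₄ D₁ hD₁ D₂ hD₂ D₃ hD₃ (union_eq_of_card_inter_eq_one hR₄ hs₁ hs₂ hs₃
      (hX.card_divider hD₁) (hX.card_divider hD₂) (hX.card_divider hD₃) h₁₂ h₁₃ h₂₃ hint) hint
  · intro hL R hR hR₄ D₁ hD₁ D₂ hD₂ D₃ hD₃ hun hint
    obtain ⟨h₁₂, h₁₃, h₂₃⟩ := pairwise_ne_of_union_eq_of_card_inter_eq_one hR₄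
      (hX.card_divider hD₁) (hX.card_divider hD₂) (hX.card_divider hD₃) hun hint
    subst hun
    exact hL _ hR hR₄ D₁ hD₁ D₂ hD₂ D₃ hD₃ (subset_union_left.trans subset_union_left)
      (subset_union_right.trans subset_union_left) subset_union_right h₁₂ h₁₃ h₂₃ hint

lemma IsDPS.forall_in_three_points_iff_tripleLaw (C : ℕ → ℕ → ℕ → Prop) :
    (∀ R ⊆ X.1, R.card = 4 → ∀ D₁ ∈ X.2, ∀ D₂ ∈ X.2, ∀ D₃ ∈ X.2,
      D₁ ≠ D₂ → D₁ ≠ D₃ → D₂ ≠ D₃ →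
      D₁.1 ∪ D₂.1 ∪ D₃.1 ⊆ R → (D₁.1 ∪ D₂.1 ∪ D₃.1).card = 3 →
      C (phi D₁.2 (R \ D₁.1)) (phi D₂.2 (R \ D₂.1)) (phi D₃.2 (R \ D₃.1))) ↔
    TripleLaw X (fun d₁ d₂ d₃ => (d₁ ∪ d₂ ∪ d₃).card = 3) C := by
  constructor
  · intro hL R hR hR₄ D₁ hD₁ D₂ hD₂ D₃ hD₃ hs₁ hs₂ hs₃ h₁₂ h₁₃ h₂₃ hcard
    exact hL R hR hR₄ D₁ hD₁ D₂ hD₂ D₃ hD₃ (mt (hX.eq_iff_divider_eq hD₁ hD₂).1 h₁₂)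
      (mt (hX.eq_iff_divider_eq hD₁ hD₃).1 h₁₃) (mt (hX.eq_iff_divider_eq hD₂ hD₃).1 h₂₃)
      (union_subset (union_subset hs₁ hs₂) hs₃) hcard
  · intro hL R hR hR₄ D₁ hD₁ D₂ hD₂ D₃ hD₃ h₁₂ h₁₃ h₂₃ hsub hcard
    obtain ⟨⟨hs₁, hs₂⟩, hs₃⟩ := And.imp_left union_subset_iff.1 (union_subset_iff.1 hsub)
    exact hL R hR hR₄ D₁ hD₁ D₂ hD₂ D₃ hD₃ hs₁ hs₂ hs₃ (mt (hX.eq_iff_divider_eq hD₁ hD₂).2 h₁₂)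
      (mt (hX.eq_iff_divider_eq hD₁ hD₃).2 h₁₃) (mt (hX.eq_iff_divider_eq hD₂ hD₃).2 h₂₃) hcard

end IsDPS

theorem stmt_5_general (X : PreDPS) (hX : IsDPS X) :
    LawsDPS X ↔ LawsUDPS (Fudps X) := by
  have sharing_point (C : ℕ → ℕ → ℕ → Prop) :=
    (hX.forall_sharing_point_iff_tripleLaw C).trans (hX.tripleLaw_iff _ C)
  exact and_congr (sharing_point fun a b c => (a = 0 ↔ b = c))
    (and_congr (sharing_point fun a b c => (a = 1 ↔ b ≠ c))
      ((hX.forall_in_three_points_iff_tripleLaw fun a b c => a = 0 → b = 0 → c = 1).trans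
        (hX.tripleLaw_iff _ _)))

/-- Lemma 2: a div point set `X` with at least 4 points satisfies (L1), (L2), (L3)
(i.e. `X ∈ DPS⁺`) iff `F_udps X` satisfies (U1), (U2), (U3) (i.e. `F_udps X ∈ UDPS⁺`). -/
theorem stmt_5 (X : PreDPS) (hX : IsDPS X) (h4 : 4 ≤ X.1.card) :
    LawsDPS X ↔ LawsUDPS (Fudps X) :=
  stmt_5_general X hX
end

section
/- For any div point set X with at least 4 points, any natural numbers m, n ≥ 1, any sub div point set A of X of m points, and any sub div point set B of X of n points, the sets of unit dividons of F_udps(A) and F_udps(B) have exactly 6·C(k,4) elements in common, where k = |π₁(A) ∩ π₁(B)| is the number of points that A and B have in common (Lemma 4). -/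
open Finset

lemma Fudps_snd (X : PreDPS) :
    (Fudps X).2 = X.2.biUnion fun D => ((X.1 \ D.1).powersetCard 2).image (unitDividon D) :=
  rfl

lemma unitDividon_injective (D : Dividon) : Function.Injective (unitDividon D) := fun T₁ T₂ h => by
  simpa only [unionOf_unitDividon] using congrArg (fun E => unionOf E.2) h

lemma Fudps_filter_xi_subset {X : PreDPS} {S : Finset ℕ} (hS : S ⊆ X.1) :
    (Fudps X).2.filter (fun E => xi E ⊆ S) =
      (X.2.filter fun D => D.1 ⊆ S).biUnion
        fun D => ((S \ D.1).powersetCard 2).image (unitDividon D) := by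
  ext E
  simp only [Fudps_snd, mem_filter, mem_biUnion, mem_image, mem_powersetCard, subset_sdiff]
  constructor
  · rintro ⟨⟨D, hD, T, ⟨⟨-, hTd⟩, hT⟩, rfl⟩, hxi⟩
    rw [xi_unitDividon, union_subset_iff] at hxi
    exact ⟨D, ⟨hD, hxi.1⟩, T, ⟨⟨hxi.2, hTd⟩, hT⟩, rfl⟩
  · rintro ⟨D, ⟨hD, hdS⟩, T, ⟨⟨hTS, hTd⟩, hT⟩, rfl⟩
    rw [xi_unitDividon]
    exact ⟨⟨D, hD, T, ⟨⟨hTS.trans hS, hTd⟩, hT⟩, rfl⟩, union_subset hdS hTS⟩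

namespace IsDPS

variable {X : PreDPS}

lemma injOn_fst (hX : IsDPS X) : Set.InjOn Prod.fst (X.2 : Set Dividon) :=
  fun D₁ h₁ D₂ h₂ => hX.2.2.2 D₁ h₁ D₂ h₂

lemma image_fst (hX : IsDPS X) : X.2.image Prod.fst = X.1.powersetCard 2 := by
  refine eq_of_subset_of_card_le (fun d hd => ?_) ?_
  · obtain ⟨D, hD, rfl⟩ := mem_image.mp hd
    exact mem_powersetCard.mpr ⟨(hX.2.2.1 D hD).2.1, (hX.2.2.1 D hD).1⟩
  · rw [card_powersetCard, card_image_of_injOn hX.injOn_fst, hX.2.1]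

lemma card_filter_fst_subset (hX : IsDPS X) {S : Finset ℕ} (hS : S ⊆ X.1) :
    (X.2.filter fun D => D.1 ⊆ S).card = S.card.choose 2 := by
  rw [← card_image_of_injOn (hX.injOn_fst.mono (coe_subset.mpr (filter_subset _ _))),
    ← filter_image (p := (· ⊆ S)), hX.image_fst, ← card_powersetCard]
  congr 1
  ext d
  simp only [mem_filter, mem_powersetCard]
  exact ⟨fun h => ⟨h.2, h.1.2⟩, fun h => ⟨⟨h.1.trans hS, h.2⟩, h.1⟩⟩

theorem card_Fudps_filter_xi_subset (hX : IsDPS X) {S : Finset ℕ} (hS : S ⊆ X.1) :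
    ((Fudps X).2.filter fun E => xi E ⊆ S).card = S.card.choose 2 * (S.card - 2).choose 2 := by
  rw [Fudps_filter_xi_subset hS, card_biUnion, sum_const_nat, hX.card_filter_fst_subset hS]
  · intro D hD
    rw [mem_filter] at hD
    rw [card_image_of_injective _ (unitDividon_injective D), card_powersetCard,
      card_sdiff_of_subset hD.2, (hX.2.2.1 D hD.1).1]
  · intro D₁ hD₁ D₂ hD₂ hne
    have hd : D₁.1 ≠ D₂.1 := fun h =>
      hne (hX.injOn_fst (coe_subset.mpr (filter_subset _ _) hD₁)
        (coe_subset.mpr (filter_subset _ _) hD₂) h)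
    simp only [disjoint_left, mem_image]
    rintro E ⟨T₁, -, rfl⟩ ⟨T₂, -, hE⟩
    exact hd (congrArg Prod.fst hE).symm

end IsDPS

lemma Fudps_inter_of_isSdps {X A B : PreDPS} {Pa Pb : Finset ℕ}
    (hA : IsSdps X Pa A) (hB : IsSdps X Pb B) :
    (Fudps A).2 ∩ (Fudps B).2 = (Fudps X).2.filter fun E => xi E ⊆ Pa ∩ Pb := by
  rw [hA.2.2.2.2, hB.2.2.2.2, ← filter_and]
  simp only [subset_inter_iff]

lemma Nat.choose_two_mul_choose_sub_two (k : ℕ) :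
    k.choose 2 * (k - 2).choose 2 = 6 * k.choose 4 := by
  rw [← Nat.choose_mul (by norm_num : 2 ≤ 4), mul_comm]
  rfl

theorem stmt_7_general (X : PreDPS) (hX : IsDPS X)
    (Pa Pb : Finset ℕ) (A B : PreDPS)
    (hA : IsSdps X Pa A) (hB : IsSdps X Pb B) :
    ((Fudps A).2 ∩ (Fudps B).2).card = 6 * Nat.choose ((A.1 ∩ B.1).card) 4 := by
  rw [Fudps_inter_of_isSdps hA hB,
    hX.card_Fudps_filter_xi_subset (inter_subset_left.trans hA.1), hA.2.2.2.1, hB.2.2.2.1,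
    Nat.choose_two_mul_choose_sub_two]

/-- Lemma 4: for any div point set `X` with at least 4 points and any two sub div point
sets `A` (of `m ≥ 1` points) and `B` (of `n ≥ 1` points) of `X`, the unit dividon sets of
`F_udps A` and `F_udps B` have exactly `6·C(k,4)` common elements, where
`k = |π₁(A) ∩ π₁(B)|`. -/
theorem stmt_7 (X : PreDPS) (hX : IsDPS X) (h4 : 4 ≤ X.1.card)
    (m n : ℕ) (hm : 1 ≤ m) (hn : 1 ≤ n)
    (Pa Pb : Finset ℕ) (A B : PreDPS)
    (hPa : Pa.card = m) (hPb : Pb.card = n)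
    (hA : IsSdps X Pa A) (hB : IsSdps X Pb B) :
    ((Fudps A).2 ∩ (Fudps B).2).card = 6 * Nat.choose ((A.1 ∩ B.1).card) 4 :=
  stmt_7_general X hX Pa Pb A B hA hB
end
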